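/- arXiv:1705.03492 — 2 statements merged into one kernel-verified Lean document; each statement's English description precedes it below -/
import Mathlib

section
/- Let A be a primitive axial algebra of Jordan type η over a field F with char F ≠ 2. If a and b are distinct η-axes in A with τ_a = τ_b, then ab = 0. -/
universe u v

section Prelim

variable (F : Type u) {A : Type v} [Field F] [NonUnitalNonAssocCommRing A]
  [Module F A] [SMulCommClass F A A] [IsScalarTower F A A]

/-- The λ-eigenspace of the adjoint map `ad_a : x ↦ a * x`. -/
def eigSp (a : A) (l : F) : Submodule F A where
  carrier := {x | a * x = l • x}
  add_mem' := by
    intro x y hx hy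
    simp only [Set.mem_setOf_eq] at *
    rw [mul_add, hx, hy, smul_add]
  zero_mem' := by simp
  smul_mem' := by
    intro c x hx
    simp only [Set.mem_setOf_eq] at *
    rw [mul_smul_comm, hx, smul_smul, smul_smul, mul_comm]

/-- `a` is a (primitive) `η`-axis. -/
structure IsAxis (η : F) (a : A) : Prop where
  ne_zero : a ≠ 0
  idem : a * a = a
  decomp : eigSp F a 1 ⊔ eigSp F a 0 ⊔ eigSp F a η = ⊤
  prim : eigSp F a 1 = Submodule.span F {a}
  f11 : ∀ x ∈ eigSp F a 1, ∀ y ∈ eigSp F a 1, x * y ∈ eigSp F a 1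
  f00 : ∀ x ∈ eigSp F a 0, ∀ y ∈ eigSp F a 0, x * y ∈ eigSp F a 0
  f10 : ∀ x ∈ eigSp F a 1, ∀ y ∈ eigSp F a 0, x * y = 0
  fpe : ∀ x ∈ eigSp F a 1 ⊔ eigSp F a 0, ∀ y ∈ eigSp F a η, x * y ∈ eigSp F a η
  fee : ∀ x ∈ eigSp F a η, ∀ y ∈ eigSp F a η, x * y ∈ eigSp F a 1 ⊔ eigSp F a 0

/-- `τ` is the Miyamoto involution of the `η`-axis `a`. -/
structure IsMiyamoto (η : F) (a : A) (τ : A → A) : Prop where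
  fixes : ∀ x ∈ eigSp F a 1 ⊔ eigSp F a 0, τ x = x
  negates : ∀ x ∈ eigSp F a η, τ x = -x
  map_add : ∀ x y : A, τ (x + y) = τ x + τ y
  map_smul : ∀ (c : F) (x : A), τ (c • x) = c • τ x
  map_mul : ∀ x y : A, τ (x * y) = τ x * τ y
  bijective : Function.Bijective τ

/-- `c = φ_a(u)`, the projection of `u` to `F·a` w.r.t. the axis `a`. -/
def IsProjCoeff (η : F) (a u : A) (c : F) : Prop :=
  ∃ u0 ∈ eigSp F a 0, ∃ ue ∈ eigSp F a η, u = c • a + u0 + ue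

/-- `e` is an identity element of the subalgebra `N`. -/
def IsIdentOf (N : NonUnitalSubalgebra F A) (e : A) : Prop :=
  e ∈ N ∧ ∀ z ∈ N, e * z = z

/-- `ψ` is an `F`-algebra automorphism of `A`. -/
structure IsAlgAut (ψ : A → A) : Prop where
  map_add : ∀ x y : A, ψ (x + y) = ψ x + ψ y
  map_smul : ∀ (c : F) (x : A), ψ (c • x) = c • ψ x
  map_mul : ∀ x y : A, ψ (x * y) = ψ x * ψ y
  bijective : Function.Bijective ψ

/-- The graph `Δ_𝒜`: distinct axes are adjacent iff their product is nonzero. -/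
def axesGraph (𝒜 : Set A) : SimpleGraph 𝒜 where
  Adj x y := x ≠ y ∧ (x : A) * (y : A) ≠ 0
  symm := by
    constructor
    rintro x y ⟨hxy, hm⟩
    exact ⟨hxy.symm, by rwa [mul_comm]⟩
  loopless := by constructor; rintro x ⟨h, -⟩; exact h rfl

/-- Multiplication of the Jordan algebra of Clifford type `J(V,B) = F·e ⊕ V`. -/
def cliffMul {V : Type*} [AddCommGroup V] [Module F V]
    (B : V →ₗ[F] V →ₗ[F] F) (x y : F × V) : F × V :=
  (x.1 * y.1 + B x.2 y.2, x.1 • y.2 + y.1 • x.2)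

end Prelim

/-- An isomorphism of `A` with a Jordan algebra of Clifford type `J(V,B)`. -/
structure CliffordTypeIso (F : Type u) (A : Type v) [Field F]
    [NonUnitalNonAssocCommRing A] [Module F A] [SMulCommClass F A A]
    [IsScalarTower F A A] where
  V : Type v
  [instAdd : AddCommGroup V]
  [instMod : Module F V]
  B : V →ₗ[F] V →ₗ[F] F
  symm : ∀ v w : V, B v w = B w v
  iso : A ≃ₗ[F] F × V
  mul_compat : ∀ x y : A, iso (x * y) = cliffMul F B (iso x) (iso y)

/-!
The common involution `τ` fixes both axes, and an axis `a` sends every `τ_a`-fixed vector into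
`F a` (the `η`-component of a fixed vector vanishes as `char F ≠ 2`, and `a` kills the
`0`-component). Hence `ab ∈ F a ∩ F b`, and if `ab ≠ 0` the idempotents `a` and `b` are
proportional, which forces `a = b`.
-/

section

variable {F : Type u} {A : Type v} [Field F] [NonUnitalNonAssocCommRing A]
  [Module F A] [SMulCommClass F A A]

lemma mem_eigSp_iff {a x : A} {l : F} : x ∈ eigSp F a l ↔ a * x = l • x := Iff.rfl

lemma mem_eigSp_one_of_mul_self {a : A} (h : a * a = a) : a ∈ eigSp F a 1 := by
  rw [mem_eigSp_iff, one_smul, h]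

lemma mul_eq_of_mem_eigSp_one_sup_zero {a x : A} (hx : x ∈ eigSp F a 1 ⊔ eigSp F a 0) :
    ∃ p ∈ eigSp F a 1, a * x = p := by
  obtain ⟨p, hp, q, hq, rfl⟩ := Submodule.mem_sup.mp hx
  have hp' : a * p = p := by simpa [mem_eigSp_iff] using hp
  have hq' : a * q = 0 := by simpa [mem_eigSp_iff] using hq
  exact ⟨p, hp, by rw [mul_add, hp', hq', add_zero]⟩

lemma eq_of_mul_self_of_mem_span [IsScalarTower F A A] {a b : A} (ha : a * a = a) (ha0 : a ≠ 0)
    (hb : b * b = b) (hab : a ∈ Submodule.span F {b}) : a = b := by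
  obtain ⟨t, rfl⟩ := Submodule.mem_span_singleton.mp hab
  have hfix : t • (t • b) = t • b := by
    rw [← mul_smul, ← hb, ← smul_mul_smul_comm, hb, ha]
  have ht : t = 1 := by
    by_contra ht
    have : (t - 1) • t • b = 0 := by rw [sub_smul, one_smul, hfix, sub_self]
    exact ha0 ((smul_eq_zero.mp this).resolve_left (sub_ne_zero.mpr ht))
  rw [ht, one_smul]

namespace IsMiyamoto

variable {η : F} {a : A} {τ : A → A}

lemma mem_eigSp_one_sup_zero_of_apply_eq (hτ : IsMiyamoto F η a τ) (hchar : (2 : F) ≠ 0)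
    (ha : IsAxis F η a) {x : A} (hx : τ x = x) : x ∈ eigSp F a 1 ⊔ eigSp F a 0 := by
  have hx_top : x ∈ eigSp F a 1 ⊔ eigSp F a 0 ⊔ eigSp F a η :=
    ha.decomp ▸ Submodule.mem_top
  obtain ⟨p, hp, e, he, rfl⟩ := Submodule.mem_sup.mp hx_top
  have h2e : (2 : F) • e = 0 := by
    rw [hτ.map_add, hτ.fixes p hp, hτ.negates e he] at hx
    rw [two_smul]
    exact neg_eq_iff_add_eq_zero.mp (add_left_cancel hx)
  rwa [(smul_eq_zero.mp h2e).resolve_left hchar, add_zero]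

lemma mul_mem_span_of_apply_eq (hτ : IsMiyamoto F η a τ) (hchar : (2 : F) ≠ 0)
    (ha : IsAxis F η a) {x : A} (hx : τ x = x) : a * x ∈ Submodule.span F {a} := by
  obtain ⟨p, hp, hax⟩ :=
    mul_eq_of_mem_eigSp_one_sup_zero (hτ.mem_eigSp_one_sup_zero_of_apply_eq hchar ha hx)
  rw [hax, ← ha.prim]
  exact hp

end IsMiyamoto

end

theorem mul_eq_zero_of_same_miyamoto_general
    {F : Type u} {A : Type v} [Field F] [NonUnitalNonAssocCommRing A]
    [Module F A] [SMulCommClass F A A] [IsScalarTower F A A]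
    (hchar : (2 : F) ≠ 0) (η : F)
    (a b : A) (ha : IsAxis F η a) (hb : IsAxis F η b) (hab : a ≠ b)
    (τa τb : A → A) (hτa : IsMiyamoto F η a τa) (hτb : IsMiyamoto F η b τb)
    (hττ : τa = τb) :
    a * b = 0 := by
  have hb_fix : τa b = b :=
    hττ ▸ hτb.fixes b (Submodule.mem_sup_left (mem_eigSp_one_of_mul_self hb.idem))
  have ha_fix : τb a = a :=
    hττ ▸ hτa.fixes a (Submodule.mem_sup_left (mem_eigSp_one_of_mul_self ha.idem))
  obtain ⟨c, hc⟩ :=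
    Submodule.mem_span_singleton.mp (hτa.mul_mem_span_of_apply_eq hchar ha hb_fix)
  obtain ⟨d, hd⟩ :=
    Submodule.mem_span_singleton.mp (hτb.mul_mem_span_of_apply_eq hchar hb ha_fix)
  rw [mul_comm] at hd
  by_contra hne
  have hc0 : c ≠ 0 := by rintro rfl; exact hne (by rw [← hc, zero_smul])
  have ha_span : a ∈ Submodule.span F {b} := by
    rw [← inv_smul_smul₀ hc0 a, hc, ← hd, smul_smul]
    exact Submodule.mem_span_singleton.mpr ⟨_, rfl⟩
  exact hab (eq_of_mul_self_of_mem_span ha.idem ha.ne_zero hb.idem ha_span)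

/-- In a primitive axial algebra of Jordan type `η`, if `a` and
`b` are distinct `η`-axes with `τ_a = τ_b`, then `ab = 0`. -/
theorem mul_eq_zero_of_same_miyamoto
    {F : Type u} {A : Type v} [Field F] [NonUnitalNonAssocCommRing A]
    [Module F A] [SMulCommClass F A A] [IsScalarTower F A A]
    (hchar : (2 : F) ≠ 0) (η : F) (hη0 : η ≠ 0) (hη1 : η ≠ 1)
    (𝒜 : Set A) (h𝒜 : ∀ a ∈ 𝒜, IsAxis F η a)
    (hgen : NonUnitalAlgebra.adjoin F 𝒜 = ⊤)
    (a b : A) (ha : IsAxis F η a) (hb : IsAxis F η b) (hab : a ≠ b)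
    (τa τb : A → A) (hτa : IsMiyamoto F η a τa) (hτb : IsMiyamoto F η b τb)
    (hττ : τa = τb) :
    a * b = 0 :=
  mul_eq_zero_of_same_miyamoto_general hchar η a b ha hb hab τa τb hτa hτb hττ
end

section
/- Let A be a primitive axial algebra of Jordan type η over a field F with char F ≠ 2. For any two η-axes a, b ∈ A, one has φ_a(b) = φ_b(a). -/
universe u v

/-!
Write `φ` for `φ_a`; it is a linear functional with `φ (a * x) = φ x` that vanishes on
`A_0(a)` and `A_η(a)`. For `b = c • a + b₀ + b_η`, the fusion rules give
`φ (b * b) = c² + μ` and `φ (b * (a * b)) = c² + η μ` with `μ = φ (b_η * b_η)`.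
On the other side, for an idempotent `b`,
`b * (b * x) = η • (b * x) + ((1 - η) φ_b(x)) • b` whenever `x = φ_b(x) b + x₀ + x_η`,
so `φ (b * (a * b)) = η c + (1 - η) d c`. As `b * b = b` forces `μ = c - c²`, this gives
`c² = c d`; symmetrically `d² = d c`, so `(c - d)² = 0`.
-/

section ProjCoeff

variable {F : Type u} {A : Type v} [Field F] [NonUnitalNonAssocCommRing A]
  [Module F A] [SMulCommClass F A A] {η : F} {a : A}

theorem isProjCoeff_self : IsProjCoeff F η a a 1 :=
  ⟨0, zero_mem _, 0, zero_mem _, by simp⟩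

theorem isProjCoeff_zero_of_mem_eigSp_zero {x : A} (hx : x ∈ eigSp F a 0) :
    IsProjCoeff F η a x 0 :=
  ⟨x, hx, 0, zero_mem _, by simp⟩

theorem isProjCoeff_zero_of_mem_eigSp_eta {x : A} (hx : x ∈ eigSp F a η) :
    IsProjCoeff F η a x 0 :=
  ⟨0, zero_mem _, x, hx, by simp⟩

namespace IsProjCoeff

variable {u v : A} {c c' : F}

theorem add (hu : IsProjCoeff F η a u c) (hv : IsProjCoeff F η a v c') :
    IsProjCoeff F η a (u + v) (c + c') := by
  obtain ⟨u0, hu0, ue, hue, rfl⟩ := hu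
  obtain ⟨v0, hv0, ve, hve, rfl⟩ := hv
  exact ⟨u0 + v0, add_mem hu0 hv0, ue + ve, add_mem hue hve, by module⟩

theorem smul (hu : IsProjCoeff F η a u c) (r : F) : IsProjCoeff F η a (r • u) (r * c) := by
  obtain ⟨u0, hu0, ue, hue, rfl⟩ := hu
  exact ⟨r • u0, Submodule.smul_mem _ r hu0, r • ue, Submodule.smul_mem _ r hue, by module⟩

theorem mul_left (hidem : a * a = a) (hu : IsProjCoeff F η a u c) :
    IsProjCoeff F η a (a * u) c := by
  obtain ⟨u0, hu0, ue, hue, rfl⟩ := hu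
  refine ⟨0, zero_mem _, η • ue, Submodule.smul_mem _ η hue, ?_⟩
  rw [mul_add, mul_add, mul_smul_comm, hidem, hu0.out, hue.out, zero_smul, add_zero]

theorem mul_mul_left (hidem : a * a = a) (hu : IsProjCoeff F η a u c) :
    a * (a * u) = η • (a * u) + ((1 - η) * c) • a := by
  obtain ⟨u0, hu0, ue, hue, rfl⟩ := hu
  have hu0' : a * u0 = 0 := by rw [hu0.out, zero_smul]
  have hue' : a * ue = η • ue := hue.out
  simp only [mul_add, mul_smul_comm, hidem, hu0', hue', mul_zero]
  module

theorem unique (hne : a ≠ 0) (hidem : a * a = a) (hη1 : η ≠ 1)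
    (hc : IsProjCoeff F η a u c) (hc' : IsProjCoeff F η a u c') : c = c' := by
  have h : ((1 - η) * c) • a = ((1 - η) * c') • a :=
    add_left_cancel ((hc.mul_mul_left hidem).symm.trans (hc'.mul_mul_left hidem))
  exact mul_left_cancel₀ (sub_ne_zero.mpr hη1.symm) (smul_left_injective F hne h)

end IsProjCoeff

namespace IsAxis

variable (ha : IsAxis F η a)
include ha

theorem exists_isProjCoeff (u : A) : ∃ c, IsProjCoeff F η a u c := by
  have hu : u ∈ eigSp F a 1 ⊔ eigSp F a 0 ⊔ eigSp F a η := ha.decomp ▸ Submodule.mem_top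
  obtain ⟨x, hx, ue, hue, rfl⟩ := Submodule.mem_sup.mp hu
  obtain ⟨y, hy, u0, hu0, rfl⟩ := Submodule.mem_sup.mp hx
  rw [ha.prim] at hy
  obtain ⟨c, rfl⟩ := Submodule.mem_span_singleton.mp hy
  exact ⟨c, u0, hu0, ue, hue, rfl⟩

/-- `φ_a`, as a linear functional. -/
noncomputable def projCoeff (hη1 : η ≠ 1) : A →ₗ[F] F where
  toFun u := (ha.exists_isProjCoeff u).choose
  map_add' u v :=
    (ha.exists_isProjCoeff (u + v)).choose_spec.unique ha.ne_zero ha.idem hη1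
      ((ha.exists_isProjCoeff u).choose_spec.add (ha.exists_isProjCoeff v).choose_spec)
  map_smul' r u :=
    (ha.exists_isProjCoeff (r • u)).choose_spec.unique ha.ne_zero ha.idem hη1
      ((ha.exists_isProjCoeff u).choose_spec.smul r)

variable (hη1 : η ≠ 1)
include hη1

theorem projCoeff_eq {u : A} {c : F} (hu : IsProjCoeff F η a u c) : ha.projCoeff hη1 u = c :=
  (ha.exists_isProjCoeff u).choose_spec.unique ha.ne_zero ha.idem hη1 hu

theorem projCoeff_self : ha.projCoeff hη1 a = 1 :=
  ha.projCoeff_eq hη1 isProjCoeff_self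

theorem projCoeff_eq_zero_of_mem_eigSp_zero {x : A} (hx : x ∈ eigSp F a 0) :
    ha.projCoeff hη1 x = 0 :=
  ha.projCoeff_eq hη1 (isProjCoeff_zero_of_mem_eigSp_zero hx)

theorem projCoeff_eq_zero_of_mem_eigSp_eta {x : A} (hx : x ∈ eigSp F a η) :
    ha.projCoeff hη1 x = 0 :=
  ha.projCoeff_eq hη1 (isProjCoeff_zero_of_mem_eigSp_eta hx)

theorem projCoeff_mul_left (u : A) : ha.projCoeff hη1 (a * u) = ha.projCoeff hη1 u :=
  ha.projCoeff_eq hη1 ((ha.exists_isProjCoeff u).choose_spec.mul_left ha.idem)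

section Expansion

variable [IsScalarTower F A A] (c : F) {u0 ue : A}
  (hu0 : u0 ∈ eigSp F a 0) (hue : ue ∈ eigSp F a η)
include hu0 hue

theorem projCoeff_mul_self :
    ha.projCoeff hη1 ((c • a + u0 + ue) * (c • a + u0 + ue))
      = c * c + ha.projCoeff hη1 (ue * ue) := by
  have h00 := ha.projCoeff_eq_zero_of_mem_eigSp_zero hη1 (ha.f00 u0 hu0 u0 hu0)
  have h0e := ha.projCoeff_eq_zero_of_mem_eigSp_eta hη1
    (ha.fpe u0 (Submodule.mem_sup_right hu0) ue hue)
  simp only [mul_add, add_mul, smul_mul_assoc, mul_smul_comm, mul_comm u0 a, mul_comm ue a,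
    mul_comm ue u0, map_add, map_smul, smul_eq_mul, ha.idem, ha.projCoeff_mul_left,
    ha.projCoeff_self, ha.projCoeff_eq_zero_of_mem_eigSp_zero hη1 hu0,
    ha.projCoeff_eq_zero_of_mem_eigSp_eta hη1 hue, h00, h0e]
  ring

theorem projCoeff_mul_mul_left :
    ha.projCoeff hη1 ((c • a + u0 + ue) * (a * (c • a + u0 + ue)))
      = c * c + η * ha.projCoeff hη1 (ue * ue) := by
  have h0e := ha.projCoeff_eq_zero_of_mem_eigSp_eta hη1
    (ha.fpe u0 (Submodule.mem_sup_right hu0) ue hue)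
  have hau0 : a * u0 = 0 := by rw [hu0.out, zero_smul]
  have haue : a * ue = η • ue := hue
  simp only [mul_add, add_mul, smul_mul_assoc, mul_smul_comm, mul_comm u0 a, mul_comm ue a,
    hau0, haue, mul_zero, add_zero, map_add, map_smul, smul_eq_mul, ha.idem, ha.projCoeff_self,
    ha.projCoeff_eq_zero_of_mem_eigSp_eta hη1 hue, h0e]
  ring

end Expansion

theorem mul_self_eq_mul_of_isProjCoeff [IsScalarTower F A A] {b : A} (hb : b * b = b)
    {c d : F} (hc : IsProjCoeff F η a b c) (hd : IsProjCoeff F η b a d) : c * c = c * d := by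
  obtain ⟨b0, hb0, be, hbe, hb_eq⟩ := hc
  set φ := ha.projCoeff hη1
  have hφb : φ b = c := ha.projCoeff_eq hη1 ⟨b0, hb0, be, hbe, hb_eq⟩
  have h_sq : c = c * c + φ (be * be) := by
    rw [← ha.projCoeff_mul_self hη1 c hb0 hbe, ← hb_eq, hb, hφb]
  have h_via_a : φ (b * (a * b)) = c * c + η * φ (be * be) := by
    rw [hb_eq]; exact ha.projCoeff_mul_mul_left hη1 c hb0 hbe
  have h_via_b : φ (b * (a * b)) = η * c + (1 - η) * d * c := by
    rw [mul_comm a b, hd.mul_mul_left hb, map_add, map_smul, map_smul, mul_comm b a,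
      ha.projCoeff_mul_left, hφb, smul_eq_mul, smul_eq_mul, mul_assoc]
  have h : (1 - η) * (c * c) = (1 - η) * (c * d) := by
    linear_combination η * h_sq + h_via_b - h_via_a
  exact mul_left_cancel₀ (sub_ne_zero.mpr hη1.symm) h

end IsAxis

end ProjCoeff

theorem proj_coeff_symmetric_general
    {F : Type u} {A : Type v} [Field F] [NonUnitalNonAssocCommRing A]
    [Module F A] [SMulCommClass F A A] [IsScalarTower F A A]
    (η : F) (hη1 : η ≠ 1)
    (a b : A) (ha : IsAxis F η a) (hb : IsAxis F η b)
    (c d : F) (hc : IsProjCoeff F η a b c) (hd : IsProjCoeff F η b a d) :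
    c = d := by
  have hcd := ha.mul_self_eq_mul_of_isProjCoeff hη1 hb.idem hc hd
  have hdc := hb.mul_self_eq_mul_of_isProjCoeff hη1 ha.idem hd hc
  have h : (c - d) ^ 2 = 0 := by linear_combination hcd + hdc
  exact sub_eq_zero.mp (pow_eq_zero_iff two_ne_zero |>.mp h)

/-- In a primitive axial algebra of Jordan type `η`, one has
`φ_a(b) = φ_b(a)` for any two `η`-axes `a, b`. -/
theorem proj_coeff_symmetric
    {F : Type u} {A : Type v} [Field F] [NonUnitalNonAssocCommRing A]
    [Module F A] [SMulCommClass F A A] [IsScalarTower F A A]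
    (hchar : (2 : F) ≠ 0) (η : F) (hη0 : η ≠ 0) (hη1 : η ≠ 1)
    (𝒜 : Set A) (h𝒜 : ∀ a ∈ 𝒜, IsAxis F η a)
    (hgen : NonUnitalAlgebra.adjoin F 𝒜 = ⊤)
    (a b : A) (ha : IsAxis F η a) (hb : IsAxis F η b)
    (c d : F) (hc : IsProjCoeff F η a b c) (hd : IsProjCoeff F η b a d) :
    c = d :=
  proj_coeff_symmetric_general η hη1 a b ha hb c d hc hd
end
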